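/- arXiv:2603.22143 — 2 statements merged into one kernel-verified Lean document; each statement's English description precedes it below -/
import Mathlib

section
/- Let f(n) ∈ 𝒵[n] be a polynomial. Suppose property (v) holds for f: for every action of (𝒵,+) by measure-preserving transformations T(n) on a probability space (X, μ), every measurable A ⊆ X, and every ε > 0, there exist m, k ∈ 𝒵 with m ≠ 0 such that for every Følner sequence (Φ_N) in 𝒵, lim_{N→∞} (1/|Φ_N|) Σ_{n∈Φ_N} μ(A ∩ T(−f(mn+k))A) exists and is greater than μ(A)² − ε. Then for every finite partition 𝒵 = C₁ ∪ … ∪ C_r there exist i ∈ {1,…,r} and x, y, z ∈ C_i with x − y = f(z). -/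
open Filter Polynomial MeasureTheory
open scoped symmDiff Classical

noncomputable section

/-- A Følner sequence in a (countable discrete) abelian group. -/
def IsFolner {G : Type*} [AddCommGroup G] (Φ : ℕ → Finset G) : Prop :=
  (∀ N, (Φ N).Nonempty) ∧
    ∀ g : G, Tendsto
      (fun N => ((((Φ N).image (· + g)) ∆ (Φ N)).card : ℝ) / ((Φ N).card : ℝ))
      atTop (nhds 0)

/-- Property (v): for every measure-preserving action of `(𝒵,+)` on a probability space, every
measurable set `A` and every `ε > 0`, there exist `m ≠ 0` and `k` in `𝒵` such that along every
Følner sequence the averages of `μ(A ∩ T(−f(mn+k))A)` converge to a limit `> μ(A)² − ε`. -/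
def PropV {F : Type*} [Field F] (f : Polynomial (Polynomial F)) : Prop :=
  ∀ (X : Type) [MeasurableSpace X] (μ : Measure X) [IsProbabilityMeasure μ]
    (T : Polynomial F → X → X),
    (∀ n : Polynomial F, Measurable (T n)) →
    T 0 = id →
    (∀ m n : Polynomial F, T (m + n) = T m ∘ T n) →
    (∀ n : Polynomial F, MeasurePreserving (T n) μ μ) →
    ∀ A : Set X, MeasurableSet A → ∀ ε : ℝ, 0 < ε →
      ∃ m k : Polynomial F, m ≠ 0 ∧
        ∀ Φ : ℕ → Finset (Polynomial F), IsFolner Φ →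
          ∃ L : ℝ,
            Tendsto
              (fun N => (∑ n ∈ Φ N,
                  (μ (A ∩ (T (-(f.eval (m * n + k))) '' A))).toReal) / ((Φ N).card : ℝ))
              atTop (nhds L) ∧
            L > (μ A).toReal ^ 2 - ε

/-!
Call a set of polynomials large if it has positive upper density along the balls
`{p | deg (p - h) < N}` with a fixed centre `h`. The Furstenberg correspondence principle turns
each large colour class into a shift-invariant probability measure on `ℕ → Bool` in which a
return of the cylinder `{ω | ω 0 = true}` under `T(s)` yields a pair `x, x + s` in the class.
Property (v), applied to the product of these systems over all large classes with the balls
centred at `0` as Følner sequence, gives `m ≠ 0` and `k` such that the set of `z = m n + k` for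
which every large class contains a pair `x, x + f(z)` is itself large. By pigeonhole one colour
class meets this set in a large set; that class is then large too, so it contains such a `z`
together with a pair `x, x + f(z)`.
-/

open Finset Topology

lemma image_add_eq_of_forall_add_mem {G : Type*} [AddCommGroup G] [DecidableEq G] {s : Finset G}
    {g : G} (h : ∀ x ∈ s, x + g ∈ s) : s.image (· + g) = s :=
  eq_of_subset_of_card_le (fun _ hy => by obtain ⟨x, hx, rfl⟩ := mem_image.1 hy; exact h x hx)
    (card_image_of_injective _ (add_left_injective g)).ge

lemma isFolner_of_eventually_add_mem {G : Type*} [AddCommGroup G] {Φ : ℕ → Finset G}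
    (hne : ∀ N, (Φ N).Nonempty) (h : ∀ g, ∀ᶠ N in atTop, ∀ x ∈ Φ N, x + g ∈ Φ N) :
    IsFolner Φ :=
  ⟨hne, fun g => tendsto_const_nhds.congr' <| by
    filter_upwards [h g] with N hN
    simp [image_add_eq_of_forall_add_mem hN]⟩

section DegreeBall

variable (F : Type*) [Field F] [Fintype F]

def degreeBall (N : ℕ) (h : F[X]) : Finset F[X] :=
  univ.image fun v : Fin N → F => ((degreeLTEquiv F N).symm v : F[X]) + h

variable {F}

lemma mem_degreeBall {N : ℕ} {h p : F[X]} : p ∈ degreeBall F N h ↔ (p - h).degree < N := by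
  rw [← mem_degreeLT]
  simp only [degreeBall, mem_image, mem_univ, true_and]
  constructor
  · rintro ⟨v, rfl⟩
    simp
  · intro hp
    exact ⟨degreeLTEquiv F N ⟨p - h, hp⟩, by simp⟩

lemma card_degreeBall (N : ℕ) (h : F[X]) : #(degreeBall F N h) = Fintype.card F ^ N := by
  rw [degreeBall, card_image_of_injective _ fun _ _ hvw =>
    (degreeLTEquiv F N).symm.injective (Subtype.ext (add_right_cancel hvw))]
  simp

lemma degreeBall_nonempty (N : ℕ) (h : F[X]) : (degreeBall F N h).Nonempty := by
  simp [degreeBall]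

lemma add_mem_degreeBall {N : ℕ} {h p g : F[X]} (hp : p ∈ degreeBall F N h)
    (hg : g.degree < N) : p + g ∈ degreeBall F N h := by
  rw [mem_degreeBall] at hp ⊢
  rw [show p + g - h = (p - h) + g by ring]
  exact (degree_add_le _ _).trans_lt (max_lt hp hg)

omit [Fintype F] in
lemma eventually_degree_lt (g : F[X]) : ∀ᶠ N : ℕ in atTop, g.degree < N := by
  filter_upwards [eventually_gt_atTop g.natDegree] with N hN
  exact degree_le_natDegree.trans_lt (WithBot.coe_lt_coe.2 hN)

lemma mul_add_mem_degreeBall {N : ℕ} {h n : F[X]} (hn : n ∈ degreeBall F N h) (m k : F[X]) :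
    m * n + k ∈ degreeBall F (N + m.natDegree) (m * h + k) := by
  rw [mem_degreeBall] at hn ⊢
  rw [show m * n + k - (m * h + k) = m * (n - h) by ring]
  calc (m * (n - h)).degree ≤ m.degree + (n - h).degree := degree_mul_le _ _
    _ ≤ m.natDegree + (n - h).degree := add_le_add_left degree_le_natDegree _
    _ < m.natDegree + N := WithBot.add_lt_add_left WithBot.coe_ne_bot hn
    _ = ((N + m.natDegree : ℕ) : WithBot ℕ) := by push_cast; ring

lemma isFolner_degreeBall (h : F[X]) : IsFolner (fun N => degreeBall F N h) :=
  isFolner_of_eventually_add_mem (fun N => degreeBall_nonempty N h)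
    fun g => (eventually_degree_lt g).mono fun _ hN _ hx => add_mem_degreeBall hx hN

end DegreeBall

section Density

variable {F : Type*} [Field F] [Fintype F]

def HasPosUpperDensity (E : Set F[X]) : Prop :=
  ∃ c > (0 : ℝ), ∃ h : F[X], ∃ᶠ N in atTop,
    c * #(degreeBall F N h) ≤ #{p ∈ degreeBall F N h | p ∈ E}

namespace HasPosUpperDensity

lemma mono {E E' : Set F[X]} (hE : HasPosUpperDensity E) (hEE' : E ⊆ E') :
    HasPosUpperDensity E' := by
  obtain ⟨c, hc, h, hfreq⟩ := hE
  refine ⟨c, hc, h, hfreq.mono fun N hN => hN.trans ?_⟩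
  exact_mod_cast card_le_card fun p hp => by
    rw [mem_filter] at hp ⊢
    exact ⟨hp.1, hEE' hp.2⟩

lemma nonempty {E : Set F[X]} (hE : HasPosUpperDensity E) : E.Nonempty := by
  obtain ⟨c, hc, h, hfreq⟩ := hE
  obtain ⟨N, hN⟩ := hfreq.exists
  have hpos : 0 < c * #(degreeBall F N h) := by
    have := (degreeBall_nonempty N h).card_pos
    positivity
  obtain ⟨p, hp⟩ := card_pos.1 (by exact_mod_cast hpos.trans_le hN)
  exact ⟨p, (mem_filter.1 hp).2⟩

lemma exists_fiber {ι : Type*} [Fintype ι] {E : Set F[X]} (hE : HasPosUpperDensity E)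
    (χ : F[X] → ι) : ∃ j, HasPosUpperDensity (E ∩ χ ⁻¹' {j}) := by
  obtain ⟨c, hc, h, hfreq⟩ := hE
  have : Nonempty ι := ⟨χ 0⟩
  have hfiber : ∃ᶠ N in atTop, ∃ j, c / Fintype.card ι * #(degreeBall F N h) ≤
      #{p ∈ degreeBall F N h | p ∈ E ∩ χ ⁻¹' {j}} := hfreq.mono fun N hN => by
    obtain ⟨j, -, hj⟩ := exists_le_card_fiber_of_nsmul_le_card_of_maps_to
      (s := {p ∈ degreeBall F N h | p ∈ E}) (f := χ)
      (b := c / Fintype.card ι * #(degreeBall F N h)) (fun _ _ => mem_univ _) univ_nonempty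
      (by rw [card_univ, nsmul_eq_mul]; field_simp; exact hN)
    exact ⟨j, by simpa [filter_filter] using hj⟩
  obtain ⟨j, hj⟩ := frequently_exists.1 hfiber
  exact ⟨j, c / Fintype.card ι, by positivity, h, by convert hj⟩

lemma image_mul_add {E : Set F[X]} (hE : HasPosUpperDensity E) {m : F[X]} (hm : m ≠ 0)
    (k : F[X]) : HasPosUpperDensity ((fun n => m * n + k) '' E) := by
  obtain ⟨c, hc, h, hfreq⟩ := hE
  set q := (Fintype.card F : ℝ)
  refine ⟨c / q ^ m.natDegree, by positivity, m * h + k,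
    (tendsto_add_atTop_nat m.natDegree).frequently (hfreq.mono fun N hN => ?_)⟩
  have hmaps : ∀ n ∈ {p ∈ degreeBall F N h | p ∈ E}, m * n + k ∈
      {p ∈ degreeBall F (N + m.natDegree) (m * h + k) | p ∈ (fun n => m * n + k) '' E} := by
    intro n hn
    obtain ⟨hnB, hnE⟩ := mem_filter.1 hn
    exact mem_filter.2 ⟨mul_add_mem_degreeBall hnB m k, n, hnE, rfl⟩
  calc c / q ^ m.natDegree * #(degreeBall F (N + m.natDegree) (m * h + k))
      = c * #(degreeBall F N h) := by
        simp only [card_degreeBall, q]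
        push_cast
        field_simp
        ring
    _ ≤ _ := hN.trans <| by
        exact_mod_cast card_le_card_of_injOn _ hmaps
          fun a _ b _ hab => mul_left_cancel₀ hm (add_right_cancel hab)

lemma of_tendsto_average {u : F[X] → ℝ} (hu : ∀ n, u n ≤ 1) {L : ℝ} (hL : 0 < L)
    (hlim : Tendsto (fun N => (∑ n ∈ degreeBall F N 0, u n) / #(degreeBall F N 0))
      atTop (𝓝 L)) :
    HasPosUpperDensity {n | u n ≠ 0} := by
  refine ⟨L / 2, by positivity, 0,
    ((hlim.eventually (lt_mem_nhds (half_lt_self hL))).mono fun N hN => ?_).frequently⟩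
  have hcard : (0 : ℝ) < #(degreeBall F N 0) := by
    exact_mod_cast (degreeBall_nonempty N 0).card_pos
  rw [lt_div_iff₀ hcard] at hN
  calc L / 2 * #(degreeBall F N 0) ≤ ∑ n ∈ degreeBall F N 0, u n := hN.le
    _ = ∑ n ∈ degreeBall F N 0 with u n ≠ 0, u n := (sum_filter_ne_zero _).symm
    _ ≤ ∑ n ∈ degreeBall F N 0 with u n ≠ 0, 1 := sum_le_sum fun n _ => hu n
    _ = _ := by simp only [sum_const, nsmul_one, Set.mem_ofPred_eq]

end HasPosUpperDensity

end Density

section Correspondence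

variable {Z : Type*} [AddCommGroup Z] (e : ℕ ≃ Z)

-- `Z → Bool` transported along `e`, so that the space lies in `Type` as `PropV` requires.
def shift (s : Z) (ω : ℕ → Bool) : ℕ → Bool := fun l => ω (e.symm (e l + s))

lemma shift_zero : shift e 0 = id := by
  funext ω l
  simp [shift]

lemma shift_add (m n : Z) : shift e (m + n) = shift e m ∘ shift e n := by
  funext ω l
  simp [shift, add_assoc]

lemma continuous_shift (s : Z) : Continuous (shift e s) :=
  continuous_pi fun _ => continuous_apply _

def coding (E : Set Z) (g : Z) : ℕ → Bool := fun l => decide (g + e l ∈ E)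

lemma shift_coding (E : Set Z) (g s : Z) : shift e s (coding e E g) = coding e E (g + s) := by
  funext l
  simp [shift, coding, add_assoc, add_comm (e _)]

def originCylinder : Set (ℕ → Bool) := {ω | ω (e.symm 0) = true}

lemma isClopen_originCylinder : IsClopen (originCylinder e) :=
  (isClopen_discrete {true}).preimage (continuous_apply _)

lemma coding_mem_originCylinder {E : Set Z} {g : Z} :
    coding e E g ∈ originCylinder e ↔ g ∈ E := by
  simp [coding, originCylinder]

lemma coding_mem_originCylinder_inter_preimage_shift {E : Set Z} {g s : Z} :
    coding e E g ∈ originCylinder e ∩ shift e s ⁻¹' originCylinder e ↔ g ∈ E ∧ g + s ∈ E := by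
  rw [Set.mem_inter_iff, Set.mem_preimage, shift_coding, coding_mem_originCylinder,
    coding_mem_originCylinder]

def empiricalMeasure (E : Set Z) (Ψ : Finset Z) (hΨ : Ψ.Nonempty) :
    ProbabilityMeasure (ℕ → Bool) :=
  ⟨((PMF.uniformOfFinset Ψ hΨ).map (coding e E)).toMeasure, inferInstance⟩

variable {E : Set Z} {Ψ : Finset Z} (hΨ : Ψ.Nonempty)

lemma empiricalMeasure_apply {S : Set (ℕ → Bool)} (hS : MeasurableSet S) :
    (empiricalMeasure e E Ψ hΨ : Measure (ℕ → Bool)) S = #{g ∈ Ψ | coding e E g ∈ S} / #Ψ := by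
  rw [empiricalMeasure, ProbabilityMeasure.coe_mk,
    PMF.toMeasure_apply_eq_toOuterMeasure_apply _ hS, PMF.toOuterMeasure_map_apply,
    PMF.toOuterMeasure_uniformOfFinset_apply]
  rfl

lemma empiricalMeasure_real_apply {S : Set (ℕ → Bool)} (hS : MeasurableSet S) :
    (empiricalMeasure e E Ψ hΨ : Measure (ℕ → Bool)).real S =
      #{g ∈ Ψ | coding e E g ∈ S} / (#Ψ : ℝ) := by
  simp [measureReal_def, empiricalMeasure_apply e hΨ hS, ENNReal.toReal_div]

lemma map_shift_empiricalMeasure {s : Z} (hs : ∀ g ∈ Ψ, g + s ∈ Ψ) :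
    (empiricalMeasure e E Ψ hΨ).map (continuous_shift e s).measurable.aemeasurable =
      empiricalMeasure e E Ψ hΨ := by
  refine ProbabilityMeasure.toMeasure_injective (Measure.ext fun S hS => ?_)
  rw [ProbabilityMeasure.toMeasure_map, Measure.map_apply (continuous_shift e s).measurable hS,
    empiricalMeasure_apply e hΨ hS,
    empiricalMeasure_apply e hΨ ((continuous_shift e s).measurable hS)]
  congr 2
  simp_rw [Set.mem_preimage, shift_coding]
  conv_rhs => rw [← image_add_eq_of_forall_add_mem hs]
  rw [filter_image, card_image_of_injective _ (add_left_injective s)]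

theorem exists_shift_invariant_measure_of_density {E : Set Z} {Ψ : ℕ → Finset Z}
    (hne : ∀ i, (Ψ i).Nonempty) (hinv : ∀ s, ∀ᶠ i in atTop, ∀ g ∈ Ψ i, g + s ∈ Ψ i)
    {c : ℝ} (hc : 0 < c) (hdens : ∀ i, c * #(Ψ i) ≤ #{g ∈ Ψ i | g ∈ E}) :
    ∃ μ : Measure (ℕ → Bool), IsProbabilityMeasure μ ∧
      (∀ s, MeasurePreserving (shift e s) μ μ) ∧ μ (originCylinder e) ≠ 0 ∧
      ∀ s, μ (originCylinder e ∩ shift e s ⁻¹' originCylinder e) ≠ 0 → ∃ g ∈ E, g + s ∈ E := by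
  set ν : ℕ → ProbabilityMeasure (ℕ → Bool) := fun i => empiricalMeasure e E (Ψ i) (hne i)
  -- `ProbabilityMeasure (ℕ → Bool)` is compact, so the empirical measures converge along any
  -- ultrafilter; taking one finer than `atTop` keeps the eventual invariance of `Ψ`.
  set 𝒰 := Ultrafilter.of (atTop : Filter ℕ)
  have h𝒰 : (𝒰 : Filter ℕ) ≤ atTop := Ultrafilter.of_le _
  obtain ⟨μ, hμ⟩ : ∃ μ, Tendsto ν 𝒰 (𝓝 μ) := ⟨_, (𝒰.map ν).le_nhds_lim⟩
  have hclopen {S : Set (ℕ → Bool)} (hS : IsClopen S) :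
      Tendsto (fun i => (ν i : Measure (ℕ → Bool)).real S) 𝒰
        (𝓝 ((μ : Measure (ℕ → Bool)).real S)) :=
    (ENNReal.tendsto_toReal (measure_ne_top _ _)).comp <|
      ProbabilityMeasure.tendsto_measure_of_null_frontier_of_tendsto' hμ (by simp [hS.frontier_eq])
  refine ⟨μ, inferInstance, fun s => ⟨(continuous_shift e s).measurable, ?_⟩, ?_, fun s hs => ?_⟩
  · have hmap :=
      ProbabilityMeasure.tendsto_map_of_tendsto_of_continuous ν μ hμ (continuous_shift e s)
    refine congrArg ProbabilityMeasure.toMeasure (tendsto_nhds_unique (hmap.congr' ?_) hμ)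
    filter_upwards [h𝒰 (hinv s)] with i hi
    exact map_shift_empiricalMeasure e (hne i) hi
  · have hlow : c ≤ (μ : Measure (ℕ → Bool)).real (originCylinder e) := by
      refine ge_of_tendsto' (hclopen (isClopen_originCylinder e)) fun i => ?_
      rw [empiricalMeasure_real_apply e (hne i)
          (isClopen_originCylinder e).isOpen.measurableSet,
        le_div_iff₀ (by exact_mod_cast (hne i).card_pos)]
      simpa only [coding_mem_originCylinder] using hdens i
    intro h0
    simp [measureReal_def, h0] at hlow
    linarith
  · have hS := (isClopen_originCylinder e).inter
      ((isClopen_originCylinder e).preimage (continuous_shift e s))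
    have hpos : 0 < (μ : Measure (ℕ → Bool)).real _ := ENNReal.toReal_pos hs (measure_ne_top _ _)
    obtain ⟨i, hi⟩ := ((hclopen hS).eventually (lt_mem_nhds hpos)).exists
    rw [empiricalMeasure_real_apply e (hne i) hS.isOpen.measurableSet,
      div_pos_iff_of_pos_right (by exact_mod_cast (hne i).card_pos)] at hi
    obtain ⟨g, hg⟩ := card_pos.1 (by exact_mod_cast hi)
    simp only [mem_filter] at hg
    exact ⟨g, (coding_mem_originCylinder_inter_preimage_shift e).1 hg.2⟩

end Correspondence

lemma HasPosUpperDensity.exists_shift_invariant_measure {F : Type*} [Field F] [Fintype F]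
    {E : Set F[X]} (hE : HasPosUpperDensity E) (e : ℕ ≃ F[X]) :
    ∃ μ : Measure (ℕ → Bool), IsProbabilityMeasure μ ∧
      (∀ s, MeasurePreserving (shift e s) μ μ) ∧ μ (originCylinder e) ≠ 0 ∧
      ∀ s, μ (originCylinder e ∩ shift e s ⁻¹' originCylinder e) ≠ 0 → ∃ g ∈ E, g + s ∈ E := by
  obtain ⟨c, hc, h, hfreq⟩ := hE
  obtain ⟨φ, hφ, hdens⟩ := extraction_of_frequently_atTop hfreq
  refine exists_shift_invariant_measure_of_density e (fun i => degreeBall_nonempty (φ i) h)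
    (fun s => hφ.tendsto_atTop.eventually (p := fun N => ∀ g ∈ degreeBall F N h,
      g + s ∈ degreeBall F N h) ?_) hc hdens
  exact (eventually_degree_lt s).mono fun _ hN _ hg => add_mem_degreeBall hg hN

lemma image_neg_eq_preimage {G X : Type*} [AddGroup G] {T : G → X → X} (h0 : T 0 = id)
    (hadd : ∀ m n, T (m + n) = T m ∘ T n) (s : G) (A : Set X) : T (-s) '' A = T s ⁻¹' A :=
  congrFun (Set.image_eq_preimage_of_inverse (f := T (-s)) (g := T s)
    (congrFun (show T s ∘ T (-s) = id by rw [← hadd, add_neg_cancel, h0]))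
    (congrFun (show T (-s) ∘ T s = id by rw [← hadd, neg_add_cancel, h0]))) A

theorem PropV.exists_returns {F : Type*} [Field F] [Fintype F] {f : F[X][X]} (hv : PropV f)
    {ι : Type} [Fintype ι] {E : ι → Set F[X]} (hE : ∀ j, HasPosUpperDensity (E j)) :
    ∃ R : Set F[X], HasPosUpperDensity R ∧ ∀ z ∈ R, ∀ j, ∃ x ∈ E j, x + f.eval z ∈ E j := by
  have : Countable F[X] := (AddMonoidAlgebra.coeff_injective.comp toFinsupp_injective).countable
  obtain ⟨_⟩ := nonempty_denumerable F[X]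
  set e : ℕ ≃ F[X] := (Denumerable.eqv F[X]).symm
  choose μ hμ hpres hbase hret using fun j => (hE j).exists_shift_invariant_measure e
  let T : F[X] → (ι → ℕ → Bool) → ι → ℕ → Bool := fun s x j => shift e s (x j)
  have hT0 : T 0 = id := by
    simp only [T, shift_zero]
    rfl
  have hTadd (m n : F[X]) : T (m + n) = T m ∘ T n := by
    simp only [T, shift_add]
    rfl
  set A : Set (ι → ℕ → Bool) := Set.univ.pi fun _ => originCylinder e
  have hreturn (s : F[X]) : A ∩ T (-s) '' A =
      Set.univ.pi fun _ => originCylinder e ∩ shift e s ⁻¹' originCylinder e := by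
    rw [image_neg_eq_preimage hT0 hTadd, Set.pi_inter_distrib]
    rfl
  have hA : 0 < (Measure.pi μ A).toReal := by
    refine ENNReal.toReal_pos ?_ (measure_ne_top _ _)
    rw [Measure.pi_pi]
    exact prod_ne_zero_iff.2 fun j _ => hbase j
  -- Only `L > 0` is needed, so `ε = μ(A)²` suffices.
  obtain ⟨m, k, hm, hfol⟩ := hv _ (Measure.pi μ) T (fun s => (continuous_pi fun j =>
    (continuous_shift e s).comp (continuous_apply j)).measurable) hT0 hTadd
    (fun s => measurePreserving_pi μ μ fun j => hpres j s) A
    (MeasurableSet.univ_pi fun _ => (isClopen_originCylinder e).isOpen.measurableSet) _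
    (pow_pos hA 2)
  obtain ⟨L, hL, hLpos⟩ := hfol _ (isFolner_degreeBall 0)
  refine ⟨_, (HasPosUpperDensity.of_tendsto_average (fun _ => measureReal_le_one)
    (by linarith) hL).image_mul_add hm k, ?_⟩
  rintro _ ⟨n, hn, rfl⟩ j
  rw [Set.mem_ofPred_eq, hreturn, measureReal_def, Measure.pi_pi] at hn
  exact hret j _ (prod_ne_zero_iff.1 (ENNReal.toReal_ne_zero.1 hn).1 j (mem_univ j))

/-- If `f ∈ 𝒵[n]` satisfies property (v), then for every finite partition
`𝒵 = C₁ ∪ … ∪ C_r` there are `i` and `x, y, z ∈ C_i` with `x − y = f(z)`. -/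
theorem propV_implies_partition {F : Type*} [Field F] [Fintype F]
    (f : Polynomial (Polynomial F)) (hv : PropV f) :
    ∀ (r : ℕ) (C : Fin r → Set (Polynomial F)),
      (∀ z : Polynomial F, ∃ i : Fin r, z ∈ C i) →
      ∃ i : Fin r, ∃ x ∈ C i, ∃ y ∈ C i, ∃ z ∈ C i, x - y = f.eval z := by
  intro r C hcover
  choose χ hχ using hcover
  obtain ⟨R, hR, hret⟩ :=
    hv.exists_returns (E := fun j : {j // HasPosUpperDensity (C j)} => C j) fun j => j.2
  obtain ⟨i, hi⟩ := hR.exists_fiber χ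
  have hCi : HasPosUpperDensity (C i) := hi.mono fun z hz => hz.2 ▸ hχ z
  obtain ⟨z, hzR, hzi⟩ := hi.nonempty
  obtain ⟨x, hx, hxz⟩ := hret z hzR ⟨i, hCi⟩
  exact ⟨i, x + f.eval z, hxz, x, hx, z, hzi ▸ hχ z, by ring⟩

end
end

section
/- The image of the additive map 𝒯 → 𝒯 given by x ↦ x − t^{q−1}·x^q (where x^q is the q-power Frobenius descended to 𝒯 and t^{q−1}· denotes multiplication by t^{q−1} ∈ 𝒵) equals the kernel of the additive group homomorphism 𝒯 → 𝔽, x ↦ x_{−1}, i.e., it equals {x ∈ 𝒯 : the coefficient of t^{−1} of x is 0}. In particular, this image is an additive subgroup of index q in 𝒯. -/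
open Polynomial

noncomputable section

/-- The element `t ∈ 𝓡 = 𝔽((t⁻¹))`, realized in `LaurentSeries F = HahnSeries ℤ F`, where the
series variable stands for `t⁻¹` (so `t` itself is the single term with exponent `-1`, and the
coefficient `x_{-i}` of `t^{-i}` is the Hahn series coefficient at the exponent `i`). -/
def tL (F : Type) [Field F] : LaurentSeries F := HahnSeries.single (-1 : ℤ) (1 : F)

/-- The copy of `𝒵 = 𝔽[t]` inside `𝓡 = 𝔽((t⁻¹))`, as an additive subgroup: the range of
evaluation of polynomials at `t`. -/
def ZS (F : Type) [Field F] : AddSubgroup (LaurentSeries F) :=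
  AddMonoidHom.range
    ((Polynomial.aeval (tL F) : Polynomial F →ₐ[F] LaurentSeries F)).toRingHom.toAddMonoidHom

/-- The "torus" `𝒯 = 𝓡/𝒵`. -/
abbrev TT (F : Type) [Field F] := LaurentSeries F ⧸ ZS F

/-- Elements of `𝒵` (polynomials in `t`) have vanishing coefficients at all negative powers
of `t`. -/
lemma aeval_tL_coeff_pos (F : Type) [Field F] (u : Polynomial F) (i : ℤ) (hi : 0 < i) :
    ((Polynomial.aeval (tL F)) u : LaurentSeries F).coeff i = 0 := by
  induction u using Polynomial.induction_on' with
  | add p q hp hq => simp [map_add, hp, hq]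
  | monomial n a =>
      have h1 : (Polynomial.aeval (tL F)) (Polynomial.monomial n a)
          = HahnSeries.single (-(n : ℤ)) a := by
        simp only [Polynomial.aeval_monomial, tL, HahnSeries.single_pow,
          HahnSeries.algebraMap_apply, HahnSeries.C_apply, HahnSeries.single_mul_single,
          one_pow, mul_one, Algebra.algebraMap_self, RingHom.id_apply, zero_add, smul_neg,
          nsmul_eq_mul, Nat.cast_id, mul_neg]
        have h2 : (algebraMap F (LaurentSeries F)) a = HahnSeries.single (0:ℤ) a := by
          rw [HahnSeries.algebraMap_apply']
          simp [PowerSeries.algebraMap_apply, HahnSeries.ofPowerSeries_C, HahnSeries.C_apply]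
        rw [h2, HahnSeries.single_mul_single, zero_add, mul_one]
      rw [h1, HahnSeries.coeff_single_of_ne]
      omega

/-- The coefficient `x ↦ x_{-i}` of `t^{-i}` (for `i ≥ 1`), as an additive homomorphism
`𝒯 → 𝔽`; it is well defined since elements of `𝒵` have no negative powers of `t`. -/
def coeffT (F : Type) [Field F] (i : ℤ) (hi : 0 < i) : TT F →+ F :=
  QuotientAddGroup.lift (ZS F)
    { toFun := fun x : LaurentSeries F => x.coeff i
      map_zero' := rfl
      map_add' := fun _ _ => rfl }
    (by rintro x ⟨u, rfl⟩; exact aeval_tL_coeff_pos F u i hi)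

/-! Writing `X = t⁻¹`, every class in `𝒯` has the representative `X·f` with `f ∈ 𝔽⟦X⟧`, and the
map preserves `𝒵`. Since `t^{q-1}·X^q = X`, it sends `X·f` to `X·(f - f^q)`: it is the
Artin–Schreier map conjugated by `X`. Hence every image has `x_{-1} = c - c^q = 0`, `c = f(0)`.
Conversely, over `𝔽_q` the Frobenius of a power series is the substitution `X ↦ X^q`, so
`f - f^q = g` can be solved coefficient by coefficient, `f_n = g_n + f_{n/q}`, as soon as
`g(0) = 0`. -/

section ArtinSchreier

variable {M : Type*} [AddCommGroup M]

/-- Coefficients of the solution of `f - f(X^q) = g`; for `1 < q` the guard `n / q < n` fails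
only at `n = 0`. -/
def artinSchreierCoeff (q : ℕ) (g : ℕ → M) : ℕ → M
  | n => if q ∣ n ∧ n / q < n then g n + artinSchreierCoeff q g (n / q) else g n
decreasing_by tauto

lemma artinSchreierCoeff_sub_eq {q : ℕ} (hq : 1 < q) {g : ℕ → M} (hg : g 0 = 0) (n : ℕ) :
    artinSchreierCoeff q g n - (if q ∣ n then artinSchreierCoeff q g (n / q) else 0) = g n := by
  rcases Nat.eq_zero_or_pos n with rfl | hn
  · simp [hg]
  rw [artinSchreierCoeff]
  by_cases hdvd : q ∣ n
  · rw [if_pos ⟨hdvd, Nat.div_lt_self hn hq⟩, if_pos hdvd, add_sub_cancel_right]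
  · rw [if_neg fun h => hdvd h.1, if_neg hdvd, sub_zero]

end ArtinSchreier

namespace PowerSeries

theorem exists_sub_expand_eq {R : Type*} [CommRing R] {q : ℕ} (hq : 1 < q) {g : PowerSeries R}
    (hg : constantCoeff g = 0) : ∃ f : PowerSeries R, f - expand q (by omega) f = g := by
  refine ⟨mk (artinSchreierCoeff q (coeff · g)), ?_⟩
  ext n
  rw [map_sub, coeff_expand]
  simp only [coeff_mk]
  exact artinSchreierCoeff_sub_eq hq (by simpa using hg) n

variable {F : Type*} [Field F] [Fintype F]

theorem pow_card_eq_expand (f : PowerSeries F) :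
    f ^ Fintype.card F = expand (Fintype.card F) Fintype.card_ne_zero f := by
  ext n
  have htrunc : coeff n (f ^ Fintype.card F)
      = coeff n (((trunc (n + 1) f : Polynomial F) : PowerSeries F) ^ Fintype.card F) := by
    rw [← coeff_coe_trunc_of_lt n.lt_succ_self, ← trunc_trunc_pow,
      coeff_coe_trunc_of_lt n.lt_succ_self]
  rw [htrunc, ← Polynomial.coe_pow, Polynomial.coeff_coe, ← FiniteField.expand_card,
    Polynomial.coeff_expand Fintype.card_pos, coeff_expand, coeff_trunc,
    if_pos (Nat.lt_succ_of_le (Nat.div_le_self n _))]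

theorem exists_sub_pow_card_eq {g : PowerSeries F} (hg : constantCoeff g = 0) :
    ∃ f : PowerSeries F, f - f ^ Fintype.card F = g := by
  simpa only [pow_card_eq_expand] using exists_sub_expand_eq Fintype.one_lt_card hg

end PowerSeries

section Torus

variable {F : Type} [Field F]

lemma aeval_tL_monomial (n : ℕ) (a : F) :
    aeval (tL F) (monomial n a) = HahnSeries.single (-(n : ℤ)) a := by
  rw [aeval_monomial, HahnSeries.algebraMap_apply', tL, HahnSeries.single_pow]
  simp [HahnSeries.ofPowerSeries_C, HahnSeries.C_apply]

lemma single_mem_ZS {i : ℤ} (hi : i ≤ 0) (a : F) : HahnSeries.single i a ∈ ZS F :=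
  ⟨monomial (-i).toNat a, by
    change aeval (tL F) _ = _
    rw [aeval_tL_monomial, Int.toNat_of_nonneg (neg_nonneg.2 hi), neg_neg]⟩

lemma mem_ZS_of_coeff_pos_eq_zero {z : LaurentSeries F} (hz : ∀ i, 0 < i → z.coeff i = 0) :
    z ∈ ZS F := by
  classical
  have hfin : z.support.Finite := (Set.finite_Icc z.order 0).subset fun i hi =>
    ⟨HahnSeries.order_le_of_coeff_ne_zero hi, not_lt.1 fun h => hi (hz i h)⟩
  have hsum : z = ∑ i ∈ hfin.toFinset, HahnSeries.single i (z.coeff i) := by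
    ext j
    rw [HahnSeries.coeff_sum, Finset.sum_eq_single j]
    · simp
    · intro i _ hij
      simp [Ne.symm hij]
    · intro hj
      simpa using hj
  rw [hsum]
  refine AddSubgroup.sum_mem _ fun i hi => single_mem_ZS ?_ _
  by_contra h
  exact (Set.Finite.mem_toFinset _).1 hi (hz i (not_le.1 h))

/-- With `X = t⁻¹`, `X * fracPart x` is the representative `∑_{i ≥ 1} x_{-i} t^{-i}` of the class
of `x` in `𝒯`. -/
def fracPart (x : LaurentSeries F) : PowerSeries F := PowerSeries.mk fun n => x.coeff (n + 1)

lemma coeff_ofPowerSeries_X_mul (f : PowerSeries F) (n : ℕ) :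
    (HahnSeries.ofPowerSeries ℤ F (PowerSeries.X * f)).coeff ((n : ℤ) + 1)
      = PowerSeries.coeff n f := by
  rw [← Nat.cast_succ, HahnSeries.ofPowerSeries_apply_coeff, PowerSeries.coeff_succ_X_mul]

lemma sub_ofPowerSeries_X_mul_fracPart_mem_ZS (x : LaurentSeries F) :
    x - HahnSeries.ofPowerSeries ℤ F (PowerSeries.X * fracPart x) ∈ ZS F := by
  refine mem_ZS_of_coeff_pos_eq_zero fun i hi => ?_
  obtain ⟨n, rfl⟩ : ∃ n : ℕ, i = n + 1 := ⟨(i - 1).toNat, by omega⟩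
  rw [HahnSeries.coeff_sub, coeff_ofPowerSeries_X_mul, fracPart, PowerSeries.coeff_mk, sub_self]

lemma coeffT_mk' {i : ℤ} (hi : 0 < i) (x : LaurentSeries F) :
    coeffT F i hi (QuotientAddGroup.mk' (ZS F) x) = x.coeff i :=
  rfl

lemma coeffT_mk'_ofPowerSeries_X_mul (f : PowerSeries F) :
    coeffT F 1 one_pos
        (QuotientAddGroup.mk' (ZS F) (HahnSeries.ofPowerSeries ℤ F (PowerSeries.X * f)))
      = PowerSeries.constantCoeff f := by
  rw [coeffT_mk']
  simpa using coeff_ofPowerSeries_X_mul f 0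

lemma coeffT_surjective {i : ℤ} (hi : 0 < i) : Function.Surjective (coeffT F i hi) :=
  fun a => ⟨QuotientAddGroup.mk' (ZS F) (HahnSeries.single i a), by
    rw [coeffT_mk', HahnSeries.coeff_single_same]⟩

lemma tL_mul_ofPowerSeries_X : tL F * HahnSeries.ofPowerSeries ℤ F PowerSeries.X = 1 := by
  rw [tL, HahnSeries.ofPowerSeries_X, HahnSeries.single_mul_single]
  simp

variable [Fintype F]

def twistedArtinSchreier : LaurentSeries F →+ LaurentSeries F :=
  AddMonoidHom.id _ - (AddMonoidHom.mulLeft (tL F ^ (Fintype.card F - 1))).comp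
    (FiniteField.frobeniusAlgHom F (LaurentSeries F)).toAddMonoidHom

lemma twistedArtinSchreier_apply (x : LaurentSeries F) :
    twistedArtinSchreier x = x - tL F ^ (Fintype.card F - 1) * x ^ Fintype.card F :=
  rfl

lemma twistedArtinSchreier_mem_ZS {z : LaurentSeries F} (hz : z ∈ ZS F) :
    twistedArtinSchreier z ∈ ZS F := by
  obtain ⟨p, rfl⟩ := hz
  exact ⟨p - X ^ (Fintype.card F - 1) * p ^ Fintype.card F, by simp [twistedArtinSchreier_apply]⟩

lemma twistedArtinSchreier_ofPowerSeries_X_mul (f : PowerSeries F) :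
    twistedArtinSchreier (HahnSeries.ofPowerSeries ℤ F (PowerSeries.X * f))
      = HahnSeries.ofPowerSeries ℤ F (PowerSeries.X * (f - f ^ Fintype.card F)) := by
  have hX : tL F ^ (Fintype.card F - 1)
        * HahnSeries.ofPowerSeries ℤ F PowerSeries.X ^ Fintype.card F
      = HahnSeries.ofPowerSeries ℤ F PowerSeries.X := by
    rw [← Nat.sub_add_cancel (Fintype.card_pos (α := F)), pow_succ, ← mul_assoc,
      Nat.add_sub_cancel, ← mul_pow, tL_mul_ofPowerSeries_X, one_pow, one_mul]
  rw [twistedArtinSchreier_apply, map_mul, map_mul, map_sub, map_pow]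
  linear_combination (-(HahnSeries.ofPowerSeries ℤ F f ^ Fintype.card F)) * hX

lemma mk'_twistedArtinSchreier (x : LaurentSeries F) :
    QuotientAddGroup.mk' (ZS F) (twistedArtinSchreier x)
      = QuotientAddGroup.mk' (ZS F) (HahnSeries.ofPowerSeries ℤ F
          (PowerSeries.X * (fracPart x - fracPart x ^ Fintype.card F))) := by
  rw [← twistedArtinSchreier_ofPowerSeries_X_mul, QuotientAddGroup.mk'_apply,
    QuotientAddGroup.mk'_apply, QuotientAddGroup.eq_iff_sub_mem, ← map_sub]
  exact twistedArtinSchreier_mem_ZS (sub_ofPowerSeries_X_mul_fracPart_mem_ZS x)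

theorem range_mk'_comp_twistedArtinSchreier :
    ((QuotientAddGroup.mk' (ZS F)).comp twistedArtinSchreier).range
      = (coeffT F 1 one_pos).ker := by
  ext y
  constructor
  · rintro ⟨x, rfl⟩
    rw [AddMonoidHom.mem_ker, AddMonoidHom.comp_apply, mk'_twistedArtinSchreier,
      coeffT_mk'_ofPowerSeries_X_mul, map_sub, map_pow, FiniteField.pow_card, sub_self]
  · intro hy
    obtain ⟨Y, rfl⟩ := QuotientAddGroup.mk'_surjective (ZS F) y
    have hY : PowerSeries.constantCoeff (fracPart Y) = 0 := by
      rw [← PowerSeries.coeff_zero_eq_constantCoeff_apply, fracPart, PowerSeries.coeff_mk]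
      exact hy
    obtain ⟨f, hf⟩ := PowerSeries.exists_sub_pow_card_eq hY
    refine ⟨HahnSeries.ofPowerSeries ℤ F (PowerSeries.X * f), ?_⟩
    rw [AddMonoidHom.comp_apply, twistedArtinSchreier_ofPowerSeries_X_mul, hf,
      QuotientAddGroup.mk'_apply, QuotientAddGroup.mk'_apply, QuotientAddGroup.eq_iff_sub_mem,
      sub_mem_comm_iff]
    exact sub_ofPowerSeries_X_mul_fracPart_mem_ZS Y

end Torus

/-- The image of the additive map `𝒯 → 𝒯`, `x ↦ x − t^{q−1}·x^q` (the `q`-power Frobenius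
composed with multiplication by `t^{q−1}`, descended to `𝒯`; since the quotient map is
surjective, this image is the set of classes of `x − t^{q−1}·x^q`, `x ∈ 𝓡`) equals the kernel
`{x ∈ 𝒯 : x_{−1} = 0}` of the coefficient homomorphism `x ↦ x_{−1}`. In particular this image
is an additive subgroup of index `q` in `𝒯`. -/
theorem image_frobenius_map_eq_ker_coeff (F : Type) [Field F] [Fintype F] :
    (Set.range (fun x : LaurentSeries F =>
        QuotientAddGroup.mk' (ZS F) (x - tL F ^ (Fintype.card F - 1) * x ^ Fintype.card F))
      = { y : TT F | coeffT F 1 one_pos y = 0 }) ∧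
    ∃ K : AddSubgroup (TT F),
      (K : Set (TT F)) = Set.range (fun x : LaurentSeries F =>
        QuotientAddGroup.mk' (ZS F) (x - tL F ^ (Fintype.card F - 1) * x ^ Fintype.card F)) ∧
      K.index = Fintype.card F := by
  have hrange := congrArg SetLike.coe (range_mk'_comp_twistedArtinSchreier (F := F))
  rw [AddMonoidHom.coe_range] at hrange
  refine ⟨hrange, (coeffT F 1 one_pos).ker, hrange.symm, ?_⟩
  rw [AddSubgroup.index_ker,
    AddMonoidHom.range_eq_top_of_surjective _ (coeffT_surjective one_pos), AddSubgroup.card_top,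
    Nat.card_eq_fintype_card]

end
end
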